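/- arXiv:1610.02881 — 4 statements merged into one kernel-verified Lean document; each statement's English description precedes it below -/
import Mathlib

section
/- Let F, G : [a,b] × ℝ → ℝ be continuous with G Lipschitz in the second variable, and suppose F(x,y) < G(x,y) for all (x,y). If y, z : [a,b] → ℝ are differentiable with y'(x) = F(x, y(x)), z'(x) = G(x, z(x)) for all x, and y(a) = z(a), then y(x) < z(x) for all x ∈ (a,b]. -/
/-!
Fencing (`image_le_of_deriv_right_lt_deriv_boundary'`) gives `y ≤ z` on `[a, b]`, because
wherever `y` touches `z` its derivative is strictly smaller. If `y x = z x`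
at some `x ∈ (a, b]`, then `z - y ≥ 0` attains its minimum `0` on `[a, x]` at the right endpoint,
so its derivative `G x (z x) - F x (y x) = G x (y x) - F x (y x)` there is `≤ 0`, contradicting
`F < G`.
-/

open Set

theorem IsLocalMinOn.hasDerivWithinAt_nonpos_of_Icc_subset {f : ℝ → ℝ} {s : Set ℝ}
    {a b f' : ℝ} (h : IsLocalMinOn f s b) (hf : HasDerivWithinAt f f' s b) (hab : a < b)
    (hs : Icc a b ⊆ s) : f' ≤ 0 := by
  have hseg : segment ℝ b a ⊆ s := by
    rwa [segment_symm, segment_eq_Icc hab.le]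
  have hnonneg : 0 ≤ (a - b) * f' := by
    simpa using h.hasFDerivWithinAt_nonneg hf (sub_mem_posTangentConeAt_of_segment_subset hseg)
  nlinarith

theorem ode_comparison_strict_general
    (a b : ℝ) (F G : ℝ → ℝ → ℝ)
    (hFG : ∀ x ∈ Set.Icc a b, ∀ y : ℝ, F x y < G x y)
    (y z : ℝ → ℝ)
    (hy : ∀ x ∈ Set.Icc a b, HasDerivAt y (F x (y x)) x)
    (hz : ∀ x ∈ Set.Icc a b, HasDerivAt z (G x (z x)) x)
    (h0 : y a = z a) :
    ∀ x ∈ Set.Ioc a b, y x < z x := by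
  have hle : ∀ t ∈ Icc a b, y t ≤ z t :=
    image_le_of_deriv_right_lt_deriv_boundary' (HasDerivAt.continuousOn hy)
      (fun t ht => (hy t (Ico_subset_Icc_self ht)).hasDerivWithinAt) h0.le
      (HasDerivAt.continuousOn hz)
      (fun t ht => (hz t (Ico_subset_Icc_self ht)).hasDerivWithinAt)
      (fun t ht hyz => hyz ▸ hFG t (Ico_subset_Icc_self ht) (z t))
  intro x hx
  have hxI : x ∈ Icc a b := Ioc_subset_Icc_self hx
  refine (hle x hxI).lt_of_ne fun hxeq => ?_
  have hmin : IsMinOn (fun t => z t - y t) (Icc a b) x := fun t ht => by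
    change z x - y x ≤ z t - y t
    linarith [hle t ht]
  have hderiv : G x (z x) - F x (y x) ≤ 0 :=
    hmin.localize.hasDerivWithinAt_nonpos_of_Icc_subset
      ((hz x hxI).sub (hy x hxI)).hasDerivWithinAt hx.1 (Icc_subset_Icc_right hx.2)
  rw [← hxeq] at hderiv
  linarith [hFG x hxI (y x)]

/-- Comparison theorem for scalar ODEs: if `F < G` pointwise, `G` is Lipschitz in the
second variable, `y' = F(x, y)`, `z' = G(x, z)` on `[a,b]` and `y a = z a`, then
`y < z` on `(a, b]`. -/
theorem ode_comparison_strict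
    (a b : ℝ) (hab : a < b) (F G : ℝ → ℝ → ℝ)
    (hFcont : ContinuousOn (Function.uncurry F) (Set.Icc a b ×ˢ Set.univ))
    (hGcont : ContinuousOn (Function.uncurry G) (Set.Icc a b ×ˢ Set.univ))
    (K : NNReal) (hGlip : ∀ x ∈ Set.Icc a b, LipschitzWith K (G x))
    (hFG : ∀ x ∈ Set.Icc a b, ∀ y : ℝ, F x y < G x y)
    (y z : ℝ → ℝ)
    (hy : ∀ x ∈ Set.Icc a b, HasDerivAt y (F x (y x)) x)
    (hz : ∀ x ∈ Set.Icc a b, HasDerivAt z (G x (z x)) x)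
    (h0 : y a = z a) :
    ∀ x ∈ Set.Ioc a b, y x < z x :=
  ode_comparison_strict_general a b F G hFG y z hy hz h0
end

section
/- Let F, G : [a,b] × ℝ → ℝ be continuous with F Lipschitz in the second variable, and suppose F(x,y) < G(x,y) for all (x,y). If y, z : [a,b] → ℝ solve y' = F(x,y), z' = G(x,z) and there exists c ∈ (a,b) with y(c) = z(c), then y(x) > z(x) for all x ∈ [a,c) and y(x) < z(x) for all x ∈ (c,b]. -/
/-!
Put `w = z - y`. Wherever `w` vanishes, `w' = G(x, y) - F(x, y) > 0`, so `w` can only cross zero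
upwards. The fencing theorem `image_le_of_deriv_right_lt_deriv_boundary` turns this into `w ≥ 0`
to the right of any point where `w ≥ 0`, and a zero of `w` strictly to the right is impossible
because `w' > 0` there forces `w < 0` just before it. Applied from `c` this gives `y < z` on
`(c, b]`; applied from any `x < c` with `y x ≤ z x` it gives `w c > 0`, contradicting `y c = z c`.
-/

open Set Filter Topology

theorem HasDerivAt.eventually_nhdsLT_lt_of_pos {f : ℝ → ℝ} {f' x : ℝ} (h : HasDerivAt f f' x)
    (hf' : 0 < f') : ∀ᶠ t in 𝓝[<] x, f t < f x := by
  filter_upwards [(hasDerivAt_iff_tendsto_slope_left_right.mp h).1.eventually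
    (eventually_gt_nhds hf'), self_mem_nhdsWithin] with t hslope ht
  rw [slope_comm] at hslope
  exact (slope_pos_iff_of_le ht.le).mp hslope

section UpwardCrossing

variable {w w' : ℝ → ℝ} {a b c : ℝ}

theorem nonneg_of_deriv_pos_of_eq_zero (hw : ∀ x ∈ Icc c b, HasDerivAt w (w' x) x)
    (hpos : ∀ x ∈ Icc c b, w x = 0 → 0 < w' x) (hc : 0 ≤ w c) : ∀ x ∈ Icc c b, 0 ≤ w x := by
  have hle := image_le_of_deriv_right_lt_deriv_boundary (f := -w) (f' := -w') (B' := 0)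
    (fun x hx => (hw x hx).continuousAt.continuousWithinAt.neg)
    (fun x hx => (hw x (Ico_subset_Icc_self hx)).neg.hasDerivWithinAt)
    (by simpa using hc) (fun _ => hasDerivAt_const _ (0 : ℝ))
    (fun x hx h0 => by simpa using hpos x (Ico_subset_Icc_self hx) (by simpa using h0))
  intro x hx
  simpa using hle hx

theorem pos_of_deriv_pos_of_eq_zero (hw : ∀ x ∈ Icc c b, HasDerivAt w (w' x) x)
    (hpos : ∀ x ∈ Icc c b, w x = 0 → 0 < w' x) (hc : 0 ≤ w c) : ∀ x ∈ Ioc c b, 0 < w x := by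
  have hnonneg := nonneg_of_deriv_pos_of_eq_zero hw hpos hc
  intro x hx
  have hxIcc : x ∈ Icc c b := Ioc_subset_Icc_self hx
  refine (hnonneg x hxIcc).lt_of_ne' fun h0 => ?_
  obtain ⟨t, hwt, htc, htx⟩ := (((hw x hxIcc).eventually_nhdsLT_lt_of_pos
    (hpos x hxIcc h0)).and (Ioo_mem_nhdsLT hx.1)).exists
  linarith [hnonneg t ⟨htc.le, htx.le.trans hx.2⟩]

theorem neg_left_pos_right_of_deriv_pos_of_eq_zero (hw : ∀ x ∈ Icc a b, HasDerivAt w (w' x) x)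
    (hpos : ∀ x ∈ Icc a b, w x = 0 → 0 < w' x) (hc : c ∈ Icc a b) (hwc : w c = 0) :
    (∀ x ∈ Ico a c, w x < 0) ∧ (∀ x ∈ Ioc c b, 0 < w x) := by
  have restrict : ∀ {d}, a ≤ d → Icc d b ⊆ Icc a b := Icc_subset_Icc_left
  constructor
  · intro x hx
    by_contra! hwx
    have := pos_of_deriv_pos_of_eq_zero (fun t ht => hw t (restrict hx.1 ht))
      (fun t ht => hpos t (restrict hx.1 ht)) hwx c ⟨hx.2, hc.2⟩
    exact this.ne' hwc
  · exact pos_of_deriv_pos_of_eq_zero (fun t ht => hw t (restrict hc.1 ht))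
      (fun t ht => hpos t (restrict hc.1 ht)) hwc.ge

end UpwardCrossing

theorem ode_comparison_two_sided_general
    (a b c : ℝ) (F G : ℝ → ℝ → ℝ)
    (hFG : ∀ x ∈ Set.Icc a b, ∀ y : ℝ, F x y < G x y)
    (y z : ℝ → ℝ)
    (hy : ∀ x ∈ Set.Icc a b, HasDerivAt y (F x (y x)) x)
    (hz : ∀ x ∈ Set.Icc a b, HasDerivAt z (G x (z x)) x)
    (hc : c ∈ Set.Ioo a b) (hyz : y c = z c) :
    (∀ x ∈ Set.Ico a c, y x > z x) ∧ (∀ x ∈ Set.Ioc c b, y x < z x) := by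
  have hpos : ∀ x ∈ Icc a b, z x - y x = 0 → 0 < G x (z x) - F x (y x) := fun x hx h0 => by
    rw [sub_eq_zero.mp h0]
    exact sub_pos.mpr (hFG x hx (y x))
  obtain ⟨hleft, hright⟩ := neg_left_pos_right_of_deriv_pos_of_eq_zero
    (fun x hx => (hz x hx).sub (hy x hx)) hpos (Ioo_subset_Icc_self hc) (sub_eq_zero.mpr hyz.symm)
  exact ⟨fun x hx => sub_neg.mp (hleft x hx), fun x hx => sub_pos.mp (hright x hx)⟩

/-- Two-sided comparison theorem: if `F < G` pointwise, `F` is Lipschitz in the second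
variable, `y' = F(x,y)`, `z' = G(x,z)` on `[a,b]` and `y c = z c` at an interior point
`c`, then `y > z` on `[a, c)` and `y < z` on `(c, b]`. -/
theorem ode_comparison_two_sided
    (a b c : ℝ) (F G : ℝ → ℝ → ℝ)
    (hFcont : ContinuousOn (Function.uncurry F) (Set.Icc a b ×ˢ Set.univ))
    (hGcont : ContinuousOn (Function.uncurry G) (Set.Icc a b ×ˢ Set.univ))
    (K : NNReal) (hFlip : ∀ x ∈ Set.Icc a b, LipschitzWith K (F x))
    (hFG : ∀ x ∈ Set.Icc a b, ∀ y : ℝ, F x y < G x y)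
    (y z : ℝ → ℝ)
    (hy : ∀ x ∈ Set.Icc a b, HasDerivAt y (F x (y x)) x)
    (hz : ∀ x ∈ Set.Icc a b, HasDerivAt z (G x (z x)) x)
    (hc : c ∈ Set.Ioo a b) (hyz : y c = z c) :
    (∀ x ∈ Set.Ico a c, y x > z x) ∧ (∀ x ∈ Set.Ioc c b, y x < z x) :=
  ode_comparison_two_sided_general a b c F G hFG y z hy hz hc hyz
end

section
/- Let F, G : [a,b] × ℝ → ℝ with F(x,y) < G(x,y) everywhere and both Lipschitz in y. Let z solve z' = G(x,z) on [a,b], and let y₁, y₂ solve y' = F(x,y), intersecting z at points c₁ < c₂ respectively (y₁(c₁) = z(c₁), y₂(c₂) = z(c₂)). Then y₁(x) < y₂(x) for all x where both are defined and x ≥ c₁; in particular, in the region above z and between c₁ and c₂, the curve y₂ lies strictly above y₁ after c₁. -/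
/-!
Let `y₁` meet the β-profile `z` at `c₁`. Since `F < G`, the difference `z - y₁` has positive
derivative wherever it vanishes, so it cannot return to `0` after `c₁`; hence
`y₁ c₂ < z c₂ = y₂ c₂`. Two solutions of the scalar equation `y' = F(x, y)`, Lipschitz in `y`,
can never meet (uniqueness), so by the intermediate value theorem the strict order at `c₂`
persists on all of `[a, b]`.
-/

open Filter Topology Set

theorem HasDerivAt.eventually_nhdsLT_lt {f : ℝ → ℝ} {f' x : ℝ} (hf : HasDerivAt f f' x)
    (hf' : 0 < f') : ∀ᶠ y in 𝓝[<] x, f y < f x := by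
  have hslope : Tendsto (slope f x) (𝓝[<] x) (𝓝 f') :=
    (hasDerivWithinAt_iff_tendsto_slope' (s := Iio x) (lt_irrefl x)).1 hf.hasDerivWithinAt
  filter_upwards [hslope.eventually (lt_mem_nhds hf'), self_mem_nhdsWithin] with y hy hyx
  have hyx' : y - x < 0 := sub_neg.2 hyx
  have := mul_neg_of_pos_of_neg hy hyx'
  rwa [slope_def_field, div_mul_cancel₀ _ hyx'.ne, sub_neg] at this

theorem image_lt_of_eq_of_deriv_lt_deriv_boundary {f f' B B' : ℝ → ℝ} {c b : ℝ}
    (hf : ∀ x ∈ Icc c b, HasDerivAt f (f' x) x) (hB : ∀ x ∈ Icc c b, HasDerivAt B (B' x) x)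
    (hc : f c = B c) (bound : ∀ x ∈ Icc c b, f x = B x → f' x < B' x) :
    ∀ x ∈ Ioc c b, f x < B x := by
  have hle : ∀ x ∈ Icc c b, f x ≤ B x :=
    image_le_of_deriv_right_lt_deriv_boundary'
      (HasDerivAt.continuousOn hf) (fun x hx => (hf x (Ico_subset_Icc_self hx)).hasDerivWithinAt)
      hc.le (HasDerivAt.continuousOn hB)
      (fun x hx => (hB x (Ico_subset_Icc_self hx)).hasDerivWithinAt)
      (fun x hx => bound x (Ico_subset_Icc_self hx))
  intro x hx
  refine (hle x (Ioc_subset_Icc_self hx)).lt_of_ne fun hfx => ?_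
  -- `B - f` vanishes at `x` with positive derivative, so it is negative just before `x`.
  have hdiff := (hB x (Ioc_subset_Icc_self hx)).sub (hf x (Ioc_subset_Icc_self hx))
  have hneg := hdiff.eventually_nhdsLT_lt
    (sub_pos.2 (bound x (Ioc_subset_Icc_self hx) hfx))
  obtain ⟨y, hy, hyx⟩ := (hneg.and (Ioo_mem_nhdsLT hx.1)).exists
  have := hle y ⟨hyx.1.le, hyx.2.le.trans hx.2⟩
  simp only [Pi.sub_apply, hfx, sub_self, sub_neg] at hy
  linarith

section ODE

variable {E : Type*} [NormedAddCommGroup E] [NormedSpace ℝ E] {v : ℝ → E → E} {K : NNReal}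
  {f g : ℝ → E} {a b t₀ : ℝ}

theorem ODE_solution_unique_of_mem_Icc_of_eq
    (hv : ∀ t ∈ Icc a b, LipschitzWith K (v t))
    (hf : ∀ t ∈ Icc a b, HasDerivAt f (v t (f t)) t)
    (hg : ∀ t ∈ Icc a b, HasDerivAt g (v t (g t)) t)
    (ht₀ : t₀ ∈ Icc a b) (heq : f t₀ = g t₀) :
    EqOn f g (Icc a b) := by
  rw [← Icc_union_Icc_eq_Icc ht₀.1 ht₀.2]
  have hsub_left : Icc a t₀ ⊆ Icc a b := Icc_subset_Icc_right ht₀.2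
  have hsub_right : Icc t₀ b ⊆ Icc a b := Icc_subset_Icc_left ht₀.1
  refine EqOn.union ?_ ?_
  · have hss : Ioc a t₀ ⊆ Icc a b := Ioc_subset_Icc_self.trans hsub_left
    exact ODE_solution_unique_of_mem_Icc_left (s := fun _ => univ)
      (fun t ht => (hv t (hss ht)).lipschitzOnWith)
      (HasDerivAt.continuousOn fun t ht => hf t (hsub_left ht))
      (fun t ht => (hf t (hss ht)).hasDerivWithinAt) (fun _ _ => trivial)
      (HasDerivAt.continuousOn fun t ht => hg t (hsub_left ht))
      (fun t ht => (hg t (hss ht)).hasDerivWithinAt) (fun _ _ => trivial) heq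
  · have hss : Ico t₀ b ⊆ Icc a b := Ico_subset_Icc_self.trans hsub_right
    exact ODE_solution_unique_of_mem_Icc_right (s := fun _ => univ)
      (fun t ht => (hv t (hss ht)).lipschitzOnWith)
      (HasDerivAt.continuousOn fun t ht => hf t (hsub_right ht))
      (fun t ht => (hf t (hss ht)).hasDerivWithinAt) (fun _ _ => trivial)
      (HasDerivAt.continuousOn fun t ht => hg t (hsub_right ht))
      (fun t ht => (hg t (hss ht)).hasDerivWithinAt) (fun _ _ => trivial) heq

end ODE

theorem ODE_solution_lt_of_lt {v : ℝ → ℝ → ℝ} {K : NNReal} {f g : ℝ → ℝ} {a b t₀ : ℝ}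
    (hv : ∀ t ∈ Icc a b, LipschitzWith K (v t))
    (hf : ∀ t ∈ Icc a b, HasDerivAt f (v t (f t)) t)
    (hg : ∀ t ∈ Icc a b, HasDerivAt g (v t (g t)) t)
    (ht₀ : t₀ ∈ Icc a b) (hlt : f t₀ < g t₀) :
    ∀ x ∈ Icc a b, f x < g x := by
  intro x hx
  by_contra! hle
  obtain ⟨t, ht, hft⟩ := isPreconnected_Icc.intermediate_value₂ ht₀ hx
    (HasDerivAt.continuousOn hf) (HasDerivAt.continuousOn hg) hlt.le hle
  exact hlt.ne (ODE_solution_unique_of_mem_Icc_of_eq hv hf hg ht hft ht₀)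

theorem alpha_profiles_ordered_general
    (a b c₁ c₂ : ℝ) (F G : ℝ → ℝ → ℝ)
    (K : NNReal)
    (hFlip : ∀ x ∈ Set.Icc a b, LipschitzWith K (F x))
    (hFG : ∀ x ∈ Set.Icc a b, ∀ y : ℝ, F x y < G x y)
    (z y₁ y₂ : ℝ → ℝ)
    (hz : ∀ x ∈ Set.Icc a b, HasDerivAt z (G x (z x)) x)
    (hy₁ : ∀ x ∈ Set.Icc a b, HasDerivAt y₁ (F x (y₁ x)) x)
    (hy₂ : ∀ x ∈ Set.Icc a b, HasDerivAt y₂ (F x (y₂ x)) x)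
    (hc₁ : c₁ ∈ Set.Icc a b) (hc₂ : c₂ ∈ Set.Icc a b) (hcc : c₁ < c₂)
    (h₁ : y₁ c₁ = z c₁) (h₂ : y₂ c₂ = z c₂) :
    ∀ x ∈ Set.Icc a b, c₁ ≤ x → y₁ x < y₂ x := by
  have hsub : Icc c₁ b ⊆ Icc a b := Icc_subset_Icc_left hc₁.1
  have hy₁z : y₁ c₂ < z c₂ :=
    image_lt_of_eq_of_deriv_lt_deriv_boundary (fun x hx => hy₁ x (hsub hx))
      (fun x hx => hz x (hsub hx)) h₁
      (fun x hx hxz => hxz ▸ hFG x (hsub hx) (y₁ x)) c₂ ⟨hcc, hc₂.2⟩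
  exact fun x hx _ => ODE_solution_lt_of_lt hFlip hy₁ hy₂ hc₂ (h₂ ▸ hy₁z) x hx

/-- Ordering of α-profiles meeting a common β-profile: if `y₁`, `y₂` solve `y' = F`,
`z` solves `z' = G` with `F < G` pointwise, and `y₁` meets `z` at `c₁`, `y₂` meets `z`
at `c₂` with `c₁ < c₂`, then `y₁ < y₂` at every point `x ≥ c₁` of the domain. -/
theorem alpha_profiles_ordered
    (a b c₁ c₂ : ℝ) (F G : ℝ → ℝ → ℝ)
    (K : NNReal)
    (hFlip : ∀ x ∈ Set.Icc a b, LipschitzWith K (F x))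
    (hGlip : ∀ x ∈ Set.Icc a b, LipschitzWith K (G x))
    (hFG : ∀ x ∈ Set.Icc a b, ∀ y : ℝ, F x y < G x y)
    (z y₁ y₂ : ℝ → ℝ)
    (hz : ∀ x ∈ Set.Icc a b, HasDerivAt z (G x (z x)) x)
    (hy₁ : ∀ x ∈ Set.Icc a b, HasDerivAt y₁ (F x (y₁ x)) x)
    (hy₂ : ∀ x ∈ Set.Icc a b, HasDerivAt y₂ (F x (y₂ x)) x)
    (hc₁ : c₁ ∈ Set.Icc a b) (hc₂ : c₂ ∈ Set.Icc a b) (hcc : c₁ < c₂)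
    (h₁ : y₁ c₁ = z c₁) (h₂ : y₂ c₂ = z c₂) :
    ∀ x ∈ Set.Icc a b, c₁ ≤ x → y₁ x < y₂ x :=
  alpha_profiles_ordered_general a b c₁ c₂ F G K hFlip hFG z y₁ y₂ hz hy₁ hy₂ hc₁ hc₂ hcc h₁ h₂
end

section
/- Let κ : ℝ → ℝ be differentiable, and let a₁, a₂ > 0 (bounds on angular and linear acceleration). Fix s₀ with κ(s₀) ≠ 0. Define, for v ≥ 0, α(s₀,v) and β(s₀,v) as the max of lower bounds and min of upper bounds over the four scalar constraints |κ(s₀)·u + κ'(s₀)·v²| ≤ a₁ and |u| ≤ a₂ on the acceleration u. Then α(s₀, v) ≤ β(s₀, v) if and only if |κ'(s₀)|·v² ≤ a₁ + |κ(s₀)|·a₂. -/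
/-!
Of the four comparisons hidden in `max ≤ min`, the two between matching bounds only say
`a₁, a₂ ≥ 0`; after clearing the denominator the two mixed ones say `-a₁ - d ≤ k a₂` and
`-k a₂ ≤ a₁ - d`, i.e. `|d| ≤ a₁ + k a₂` with `d = κ'(s₀) v²`. A negative curvature
`k` is reduced to a positive one by negating both `k` and `d`.
-/

theorem max_le_min_div_iff_abs_le {a₁ a₂ k d : ℝ} (ha₁ : 0 ≤ a₁) (ha₂ : 0 ≤ a₂) (hk : 0 < k) :
    max (-a₂) ((-a₁ - d) / k) ≤ min a₂ ((a₁ - d) / k) ↔ |d| ≤ a₁ + k * a₂ := by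
  rw [max_le_iff, le_min_iff, le_min_iff, div_le_iff₀ hk, le_div_iff₀ hk,
    div_le_div_iff_of_pos_right hk, abs_le]
  constructor
  · rintro ⟨⟨-, hlow⟩, hup, -⟩
    constructor <;> linarith
  · rintro ⟨hlow, hup⟩
    refine ⟨⟨?_, ?_⟩, ?_, ?_⟩ <;> linarith

theorem unicycle_feasible_iff_general
    (κ κ' : ℝ → ℝ)
    (a₁ a₂ : ℝ) (ha₁ : 0 < a₁) (ha₂ : 0 < a₂)
    (s₀ : ℝ) (hκ₀ : κ s₀ ≠ 0)
    (α β : ℝ → ℝ)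
    (hα : ∀ v, α v = max (-a₂)
      (if 0 < κ s₀ then (-a₁ - κ' s₀ * v ^ 2) / κ s₀
        else (a₁ - κ' s₀ * v ^ 2) / κ s₀))
    (hβ : ∀ v, β v = min a₂
      (if 0 < κ s₀ then (a₁ - κ' s₀ * v ^ 2) / κ s₀
        else (-a₁ - κ' s₀ * v ^ 2) / κ s₀)) :
    ∀ v : ℝ, 0 ≤ v →
      (α v ≤ β v ↔ |κ' s₀| * v ^ 2 ≤ a₁ + |κ s₀| * a₂) := by
  intro v _
  have habs : |κ' s₀| * v ^ 2 = |κ' s₀ * v ^ 2| := by rw [abs_mul, abs_of_nonneg (sq_nonneg v)]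
  rw [hα, hβ, habs]
  rcases hκ₀.lt_or_gt with hneg | hpos
  · have hflip : ∀ b, (b - κ' s₀ * v ^ 2) / κ s₀ = (-b - -(κ' s₀ * v ^ 2)) / -κ s₀ := by
      intro b; ring
    rw [if_neg hneg.not_gt, if_neg hneg.not_gt, hflip a₁, hflip (-a₁), neg_neg, abs_of_neg hneg,
      ← abs_neg (κ' s₀ * v ^ 2)]
    exact max_le_min_div_iff_abs_le ha₁.le ha₂.le (neg_pos.mpr hneg)
  · rw [if_pos hpos, if_pos hpos, abs_of_pos hpos]
    exact max_le_min_div_iff_abs_le ha₁.le ha₂.le hpos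

/-- Feasibility of the unicycle acceleration constraints: with curvature `κ`
(differentiable, `κ(s₀) ≠ 0`) and acceleration bounds `a₁, a₂ > 0`, define the
minimum acceleration `α(v)` as the max of the lower bounds and the maximum
acceleration `β(v)` as the min of the upper bounds arising from the four scalar
constraints `|κ(s₀)·u + κ'(s₀)·v²| ≤ a₁` and `|u| ≤ a₂`.  Then for `v ≥ 0`,
`α(v) ≤ β(v)` iff `|κ'(s₀)|·v² ≤ a₁ + |κ(s₀)|·a₂`. -/
theorem unicycle_feasible_iff
    (κ κ' : ℝ → ℝ) (hκ : ∀ x, HasDerivAt κ (κ' x) x)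
    (a₁ a₂ : ℝ) (ha₁ : 0 < a₁) (ha₂ : 0 < a₂)
    (s₀ : ℝ) (hκ₀ : κ s₀ ≠ 0)
    (α β : ℝ → ℝ)
    (hα : ∀ v, α v = max (-a₂)
      (if 0 < κ s₀ then (-a₁ - κ' s₀ * v ^ 2) / κ s₀
        else (a₁ - κ' s₀ * v ^ 2) / κ s₀))
    (hβ : ∀ v, β v = min a₂
      (if 0 < κ s₀ then (a₁ - κ' s₀ * v ^ 2) / κ s₀
        else (-a₁ - κ' s₀ * v ^ 2) / κ s₀)) :
    ∀ v : ℝ, 0 ≤ v →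
      (α v ≤ β v ↔ |κ' s₀| * v ^ 2 ≤ a₁ + |κ s₀| * a₂) :=
  unicycle_feasible_iff_general κ κ' a₁ a₂ ha₁ ha₂ s₀ hκ₀ α β hα hβ
end
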